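/- arXiv:1501.04507 — 4 statements merged into one kernel-verified Lean document; each statement's English description precedes it below -/
import Mathlib

section
/- For every z₀ ∈ ℍ, the set of values {f(z₀) : f ∈ H_u} equals {z ∈ ℂ : Im z > Im z₀} ∪ {z₀}. -/
/-!
A map `f ∈ H_u` satisfies `f (iy) - iy → 0` as `y → ∞`. Letting `w = iy → ∞` in the
Schwarz–Pick inequality `Im z Im w / |z - w̄|² ≤ Im f(z) Im f(w) / |f(z) - conj f(w)|²` gives
`Im z ≤ Im f(z)`; if equality holds at one point, the open mapping theorem makes `f(z) - z`
constant, hence zero. Conversely, a point `w` with `Im w > Im z₀` is the value at `z₀` of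
`z ↦ a + √((z - a)² - 2t)`, which maps `ℍ` injectively into itself with `z (f(z) - z) → -t`; the
real parameters `a` and `t > 0` are solved from `(z₀ - a)² - (w - a)² = 2t`.
-/

open Filter Set Real

noncomputable section

/-- The upper half-plane ℍ = {z ∈ ℂ : Im z > 0}. -/
def UHP : Set ℂ := {z : ℂ | 0 < z.im}

/-- The angular limit ∠lim_{z→∞} g(z) = c: for every δ ∈ (0, π/2), g(z) → c as
|z| → ∞ with z in the sector {z ∈ ℍ : δ ≤ arg z ≤ π − δ}. -/
def AngularLimitAtInfty (g : ℂ → ℂ) (c : ℂ) : Prop :=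
  ∀ δ : ℝ, 0 < δ → δ < Real.pi / 2 →
    Tendsto g
      (Filter.comap (fun z : ℂ => ‖z‖) Filter.atTop ⊓
        Filter.principal {z : ℂ | 0 < z.im ∧ δ ≤ Complex.arg z ∧
          Complex.arg z ≤ Real.pi - δ})
      (nhds c)

/-- The class H_u: injective holomorphic self-maps of ℍ with hydrodynamic
normalization ∠lim_{z→∞} z·(f(z) − z) = c ∈ ℝ. -/
def MemHu (f : ℂ → ℂ) : Prop :=
  DifferentiableOn ℂ f UHP ∧ Set.MapsTo f UHP UHP ∧ Set.InjOn f UHP ∧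
    ∃ c : ℝ, AngularLimitAtInfty (fun z => z * (f z - z)) (c : ℂ)

open Complex ComplexConjugate Topology

@[simp] theorem mem_UHP {z : ℂ} : z ∈ UHP ↔ 0 < z.im := Iff.rfl

theorem isOpen_UHP : IsOpen UHP := isOpen_lt continuous_const continuous_im

theorem isPreconnected_UHP : IsPreconnected UHP := (convex_halfSpace_im_gt 0).isPreconnected

theorem ofReal_mul_I_mem_UHP {y : ℝ} (hy : 0 < y) : (y * I : ℂ) ∈ UHP := by
  simpa using hy

def sectorAtInfty (δ : ℝ) : Filter ℂ :=
  comap (fun z : ℂ => ‖z‖) atTop ⊓ 𝓟 {z : ℂ | 0 < z.im ∧ δ ≤ arg z ∧ arg z ≤ π - δ}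

theorem angularLimitAtInfty_iff {g : ℂ → ℂ} {c : ℂ} :
    AngularLimitAtInfty g c ↔ ∀ δ, 0 < δ → δ < π / 2 → Tendsto g (sectorAtInfty δ) (𝓝 c) :=
  Iff.rfl

theorem sin_le_sin_of_le_of_le_pi_sub {δ θ : ℝ} (hδ : 0 ≤ δ) (h₁ : δ ≤ θ) (h₂ : θ ≤ π - δ) :
    Real.sin δ ≤ Real.sin θ := by
  rcases le_total θ (π / 2) with h | h
  · exact Real.sin_le_sin_of_le_of_le_pi_div_two (by linarith) h h₁
  · rw [← Real.sin_pi_sub θ]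
    exact Real.sin_le_sin_of_le_of_le_pi_div_two (by linarith) (by linarith) (by linarith)

theorem tendsto_im_sectorAtInfty {δ : ℝ} (hδ : 0 < δ) (hδπ : δ < π) :
    Tendsto im (sectorAtInfty δ) atTop := by
  have hnorm : Tendsto (fun z : ℂ => ‖z‖) (sectorAtInfty δ) atTop :=
    tendsto_comap.mono_left inf_le_left
  refine tendsto_atTop_mono' _ ?_ (hnorm.const_mul_atTop (Real.sin_pos_of_pos_of_lt_pi hδ hδπ))
  filter_upwards [mem_inf_of_right (mem_principal_self _)] with z hz
  rw [← norm_mul_sin_arg z, mul_comm]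
  exact mul_le_mul_of_nonneg_left (sin_le_sin_of_le_of_le_pi_sub hδ.le hz.2.1 hz.2.2)
    (norm_nonneg z)

theorem tendsto_ofReal_mul_I_sectorAtInfty {δ : ℝ} (hδ : δ ≤ π / 2) :
    Tendsto (fun y : ℝ => (y * I : ℂ)) atTop (sectorAtInfty δ) := by
  refine tendsto_inf.2 ⟨tendsto_comap_iff.2 ?_, tendsto_principal.2 ?_⟩
  · simpa [Function.comp_def] using tendsto_abs_atTop_atTop
  · filter_upwards [eventually_gt_atTop 0] with y hy
    have harg : arg (y * I) = π / 2 := arg_eq_pi_div_two_iff.2 ⟨by simp, by simpa using hy⟩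
    exact ⟨ofReal_mul_I_mem_UHP hy, by linarith, by linarith⟩

theorem AngularLimitAtInfty.tendsto_ofReal_mul_I {g : ℂ → ℂ} {c : ℂ}
    (hg : AngularLimitAtInfty g c) : Tendsto (fun y : ℝ => g (y * I)) atTop (𝓝 c) :=
  (hg (π / 4) (by positivity) (by linarith [pi_pos])).comp
    (tendsto_ofReal_mul_I_sectorAtInfty (by linarith [pi_pos]))

theorem tendsto_ofReal_inv_atTop : Tendsto (fun y : ℝ => ((y : ℂ))⁻¹) atTop (𝓝 0) := by
  simpa [Function.comp_def] using (continuous_ofReal.tendsto 0).comp tendsto_inv_atTop_zero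

theorem AngularLimitAtInfty.tendsto_sub_self_ofReal_mul_I {f : ℂ → ℂ} {c : ℂ}
    (hf : AngularLimitAtInfty (fun z => z * (f z - z)) c) :
    Tendsto (fun y : ℝ => f (y * I) - y * I) atTop (𝓝 0) := by
  have h := hf.tendsto_ofReal_mul_I.mul (tendsto_ofReal_inv_atTop.mul_const (-I))
  rw [zero_mul, mul_zero] at h
  refine h.congr' ?_
  filter_upwards [eventually_ne_atTop 0] with y hy
  have hy' : (y : ℂ) ≠ 0 := ofReal_ne_zero.2 hy
  field_simp
  rw [I_sq]; ring

theorem normSq_sub_conj_sub_normSq_sub (p q : ℂ) :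
    normSq (p - conj q) - normSq (p - q) = 4 * p.im * q.im := by
  simp only [normSq_apply, sub_re, sub_im, conj_re, conj_im]
  ring

theorem sub_conj_ne_zero {p q : ℂ} (hp : p ∈ UHP) (hq : q ∈ UHP) : p - conj q ≠ 0 := by
  intro h
  have := congrArg im h
  simp only [sub_im, conj_im, sub_neg_eq_add, zero_im] at this
  exact (add_pos hp hq).ne' this

def halfPlaneToDisc (w ζ : ℂ) : ℂ := (ζ - w) / (ζ - conj w)

def discToHalfPlane (w ξ : ℂ) : ℂ := (w - conj w * ξ) / (1 - ξ)

theorem one_sub_normSq_halfPlaneToDisc {w ζ : ℂ} (hw : w ∈ UHP) (hζ : ζ ∈ UHP) :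
    1 - normSq (halfPlaneToDisc w ζ) = 4 * ζ.im * w.im / normSq (ζ - conj w) := by
  have h := normSq_pos.2 (sub_conj_ne_zero hζ hw)
  rw [halfPlaneToDisc, normSq_div, ← normSq_sub_conj_sub_normSq_sub]
  field_simp

theorem norm_halfPlaneToDisc_lt_one {w ζ : ℂ} (hw : w ∈ UHP) (hζ : ζ ∈ UHP) :
    ‖halfPlaneToDisc w ζ‖ < 1 := by
  have h := one_sub_normSq_halfPlaneToDisc hw hζ
  have hpos : 0 < 4 * ζ.im * w.im / normSq (ζ - conj w) :=
    div_pos (by have : 0 < ζ.im := hζ; have : 0 < w.im := hw; positivity)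
      (normSq_pos.2 (sub_conj_ne_zero hζ hw))
  rw [← sq_lt_one_iff₀ (norm_nonneg _), Complex.sq_norm]
  linarith

theorem discToHalfPlane_zero (w : ℂ) : discToHalfPlane w 0 = w := by
  simp [discToHalfPlane]

theorem im_discToHalfPlane (w ξ : ℂ) :
    (discToHalfPlane w ξ).im = w.im * (1 - normSq ξ) / normSq (1 - ξ) := by
  rw [discToHalfPlane, div_im, div_sub_div_same]
  congr 1
  simp only [sub_im, sub_re, mul_im, mul_re, conj_re, conj_im, normSq_apply, one_re, one_im]
  ring

theorem discToHalfPlane_mem {w ξ : ℂ} (hw : w ∈ UHP) (hξ : ‖ξ‖ < 1) :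
    discToHalfPlane w ξ ∈ UHP := by
  have hξ1 : 1 - ξ ≠ 0 := sub_ne_zero.2 (by rintro rfl; simp at hξ)
  have : normSq ξ < 1 := by rwa [← Complex.sq_norm, sq_lt_one_iff₀ (norm_nonneg _)]
  rw [mem_UHP, im_discToHalfPlane]
  exact div_pos (mul_pos hw (by linarith)) (normSq_pos.2 hξ1)

theorem discToHalfPlane_halfPlaneToDisc {w ζ : ℂ} (hw : w ∈ UHP) (hζ : ζ ∈ UHP) :
    discToHalfPlane w (halfPlaneToDisc w ζ) = ζ := by
  have h₁ := sub_conj_ne_zero hζ hw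
  have h₂ : w - conj w ≠ 0 := sub_conj_ne_zero hw hw
  rw [discToHalfPlane, halfPlaneToDisc]
  field_simp
  ring_nf
  field_simp

theorem differentiableOn_halfPlaneToDisc {w : ℂ} (hw : w ∈ UHP) :
    DifferentiableOn ℂ (halfPlaneToDisc w) UHP := fun _ hζ =>
  ((differentiableWithinAt_id.sub_const _).div (differentiableWithinAt_id.sub_const _)
    (sub_conj_ne_zero hζ hw))

theorem differentiableOn_discToHalfPlane (w : ℂ) :
    DifferentiableOn ℂ (discToHalfPlane w) (Metric.ball 0 1) := fun ξ hξ =>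
  ((differentiableWithinAt_const _).sub (differentiableWithinAt_id.const_mul _)).div
    ((differentiableWithinAt_const _).sub differentiableWithinAt_id)
    (sub_ne_zero.2 (by rintro rfl; simp at hξ))

theorem norm_halfPlaneToDisc_apply_le {f : ℂ → ℂ} (hd : DifferentiableOn ℂ f UHP)
    (hm : MapsTo f UHP UHP) {z w : ℂ} (hz : z ∈ UHP) (hw : w ∈ UHP) :
    ‖halfPlaneToDisc (f w) (f z)‖ ≤ ‖halfPlaneToDisc w z‖ := by
  have hmem : MapsTo (discToHalfPlane w) (Metric.ball 0 1) UHP := fun ξ hξ =>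
    discToHalfPlane_mem hw (mem_ball_zero_iff.1 hξ)
  have hGd : DifferentiableOn ℂ (halfPlaneToDisc (f w) ∘ f ∘ discToHalfPlane w)
      (Metric.ball 0 1) :=
    (differentiableOn_halfPlaneToDisc (hm hw)).comp
      (hd.comp (differentiableOn_discToHalfPlane w) hmem) (hm.comp hmem)
  have hGm : MapsTo (halfPlaneToDisc (f w) ∘ f ∘ discToHalfPlane w) (Metric.ball 0 1)
      (Metric.closedBall 0 1) := fun ξ hξ =>
    mem_closedBall_zero_iff.2 (norm_halfPlaneToDisc_lt_one (hm hw) (hm (hmem hξ))).le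
  simpa [discToHalfPlane_halfPlaneToDisc hw hz] using
    norm_le_norm_of_mapsTo_ball hGd hGm (by simp [discToHalfPlane_zero, halfPlaneToDisc])
      (norm_halfPlaneToDisc_lt_one hw hz)

theorem im_mul_im_div_normSq_le {f : ℂ → ℂ} (hd : DifferentiableOn ℂ f UHP)
    (hm : MapsTo f UHP UHP) {z w : ℂ} (hz : z ∈ UHP) (hw : w ∈ UHP) :
    z.im * w.im / normSq (z - conj w) ≤ (f z).im * (f w).im / normSq (f z - conj (f w)) := by
  have h := norm_halfPlaneToDisc_apply_le hd hm hz hw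
  rw [← sq_le_sq₀ (norm_nonneg _) (norm_nonneg _), Complex.sq_norm, Complex.sq_norm] at h
  have h₁ := one_sub_normSq_halfPlaneToDisc hw hz
  have h₂ := one_sub_normSq_halfPlaneToDisc (hm hw) (hm hz)
  rw [mul_assoc, mul_div_assoc] at h₁ h₂
  linarith

theorem tendsto_normSq_add_ofReal_mul_I_div_sq {u : ℝ → ℂ} {p : ℂ}
    (hu : Tendsto u atTop (𝓝 p)) :
    Tendsto (fun y : ℝ => normSq (u y + y * I) / y ^ 2) atTop (𝓝 1) := by
  have h : Tendsto (fun y : ℝ => normSq (u y * (y : ℂ)⁻¹ + I)) atTop (𝓝 (normSq (p * 0 + I))) :=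
    (continuous_normSq.tendsto _).comp ((hu.mul tendsto_ofReal_inv_atTop).add_const I)
  rw [mul_zero, zero_add, normSq_I] at h
  refine h.congr' ?_
  filter_upwards [eventually_ne_atTop 0] with y hy
  have hy' : (y : ℂ) ≠ 0 := ofReal_ne_zero.2 hy
  rw [show y ^ 2 = normSq (y : ℂ) by rw [normSq_ofReal, sq], ← normSq_div, add_div,
    mul_div_cancel_left₀ _ hy', div_eq_mul_inv]

theorem im_le_im_of_tendsto_sub_ofReal_mul_I {f : ℂ → ℂ} (hd : DifferentiableOn ℂ f UHP)
    (hm : MapsTo f UHP UHP) (hE : Tendsto (fun y : ℝ => f (y * I) - y * I) atTop (𝓝 0))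
    {z : ℂ} (hz : z ∈ UHP) : z.im ≤ (f z).im := by
  set E : ℝ → ℂ := fun y => f (y * I) - y * I
  have hA := tendsto_normSq_add_ofReal_mul_I_div_sq (tendsto_const_nhds (x := z))
  have hB := tendsto_normSq_add_ofReal_mul_I_div_sq
    ((tendsto_const_nhds (x := f z)).sub ((continuous_conj.tendsto 0).comp hE))
  have hC : Tendsto (fun y : ℝ => 1 + (E y).im * y⁻¹) atTop (𝓝 1) := by
    simpa using (((continuous_im.tendsto 0).comp hE).mul tendsto_inv_atTop_zero).const_add 1
  -- Schwarz–Pick at `w = iy`, multiplied by `y`: the two sides tend to `Im z` and `Im (f z)`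
  refine le_of_tendsto_of_tendsto (by simpa using (hA.inv₀ one_ne_zero).const_mul z.im)
    (by simpa using (hC.mul (hB.inv₀ one_ne_zero)).const_mul (f z).im) ?_
  filter_upwards [eventually_gt_atTop 0] with y hy
  have hsp := im_mul_im_div_normSq_le hd hm hz (ofReal_mul_I_mem_UHP hy)
  have hconj : conj (f (y * I)) = conj (E y) - y * I := by simp [E, conj_ofReal]
  rw [hconj, show z - conj (y * I : ℂ) = z + y * I by simp [conj_ofReal],
    show f (y * I) = y * I + E y by simp [E]] at hsp
  simp only [mul_im, ofReal_re, ofReal_im, I_re, I_im, add_im, mul_one, mul_zero, add_zero] at hsp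
  calc z.im * (y ^ 2 / normSq (z + y * I))
      = y * (z.im * y / normSq (z + y * I)) := by ring
    _ ≤ y * ((f z).im * (y + (E y).im) / normSq (f z - (conj (E y) - y * I))) :=
      mul_le_mul_of_nonneg_left hsp hy.le
    _ = _ := by rw [sub_sub_eq_add_sub, add_sub_right_comm]; field_simp

theorem eq_self_of_im_eq {f : ℂ → ℂ} (hd : DifferentiableOn ℂ f UHP)
    (him : ∀ z ∈ UHP, z.im ≤ (f z).im)
    (hE : Tendsto (fun y : ℝ => f (y * I) - y * I) atTop (𝓝 0))
    {z₀ : ℂ} (hz₀ : z₀ ∈ UHP) (heq : (f z₀).im = z₀.im) : f z₀ = z₀ := by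
  have hg : AnalyticOnNhd ℂ (fun z => f z - z) UHP :=
    (hd.sub differentiableOn_id).analyticOnNhd isOpen_UHP
  rcases hg.is_constant_or_isOpen isPreconnected_UHP with ⟨v, hv⟩ | hopen
  · have hv0 : v = 0 := tendsto_nhds_unique (tendsto_const_nhds.congr' <|
      (eventually_gt_atTop 0).mono fun y hy => (hv _ (ofReal_mul_I_mem_UHP hy)).symm) hE
    exact sub_eq_zero.1 (hv0 ▸ hv z₀ hz₀)
  · have hsub : (fun z => f z - z) '' UHP ⊆ {w : ℂ | 0 < w.im} := by
      rw [← interior_setOfPred_le_im]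
      refine interior_maximal ?_ (hopen UHP subset_rfl isOpen_UHP)
      rintro _ ⟨z, hz, rfl⟩
      simpa using him z hz
    have := hsub ⟨z₀, hz₀, rfl⟩
    simp [heq] at this

theorem MemHu.im_lt_or_eq {f : ℂ → ℂ} (hf : MemHu f) {z₀ : ℂ} (hz₀ : z₀ ∈ UHP) :
    z₀.im < (f z₀).im ∨ f z₀ = z₀ := by
  obtain ⟨hd, hm, -, c, hc⟩ := hf
  have hE := hc.tendsto_sub_self_ofReal_mul_I
  have him z (hz : z ∈ UHP) := im_le_im_of_tendsto_sub_ofReal_mul_I hd hm hE hz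
  exact (him z₀ hz₀).lt_or_eq.imp_right fun h => eq_self_of_im_eq hd him hE hz₀ h.symm

theorem re_cpow_inv_two_pos {u : ℂ} (hu : u ∈ slitPlane) : 0 < (u ^ (2⁻¹ : ℂ)).re := by
  rw [cpow_inv_two_re]
  refine Real.sqrt_pos.2 (half_pos ?_)
  rcases mem_slitPlane_iff.1 hu with h | h
  · linarith [norm_nonneg u]
  · linarith [neg_abs_le u.re, abs_re_lt_norm.2 h]

/-- `a + √((z - a)² - 2t)` with the branch of `√` valued in `ℍ`; it maps `ℍ` onto `ℍ` minus the
vertical slit from `a` to `a + i √(2t)`. -/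
def slitMap (a t : ℝ) (z : ℂ) : ℂ := a + I * (2 * t - (z - a) ^ 2) ^ (2⁻¹ : ℂ)

section slitMap

variable {a t : ℝ} {z : ℂ}

theorem slitMap_sub_sq (a t : ℝ) (z : ℂ) : (slitMap a t z - a) ^ 2 = (z - a) ^ 2 - 2 * t := by
  rw [slitMap, add_sub_cancel_left, mul_pow, I_sq, cpow_ofNat_inv_pow]
  ring

theorem two_mul_sub_sq_mem_slitPlane (ht : 0 ≤ t) (hz : z ∈ UHP) :
    2 * (t : ℂ) - (z - a) ^ 2 ∈ slitPlane := by
  have hz' : 0 < z.im := hz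
  rw [mem_slitPlane_iff]
  by_cases hre : z.re = a
  · left
    simp only [sq, sub_re, mul_re, re_ofNat, ofReal_re, im_ofNat, ofReal_im, mul_zero, sub_zero,
      hre, sub_self, sub_im, zero_sub, sub_neg_eq_add]
    nlinarith
  · right
    simp only [sub_im, mul_im, ofReal_re, ofReal_im, sq, sub_re, re_ofNat, im_ofNat]
    have : (z.re - a) * z.im ≠ 0 := mul_ne_zero (sub_ne_zero.2 hre) hz'.ne'
    contrapose! this
    linarith

theorem mapsTo_slitMap (ht : 0 ≤ t) : MapsTo (slitMap a t) UHP UHP := fun z hz => by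
  simpa [slitMap] using re_cpow_inv_two_pos (two_mul_sub_sq_mem_slitPlane (a := a) ht hz)

theorem injOn_slitMap : InjOn (slitMap a t) UHP := by
  intro z hz w hw h
  have h' : (z - w) * (z + w - 2 * a) = 0 := by
    linear_combination slitMap_sub_sq a t w - slitMap_sub_sq a t z +
      congrArg (fun x => (x - (a : ℂ)) ^ 2) h
  rcases mul_eq_zero.1 h' with h' | h'
  · exact sub_eq_zero.1 h'
  · have := congrArg im h'
    simp only [sub_im, add_im, mul_im, re_ofNat, ofReal_im, mul_zero, im_ofNat, ofReal_re,
      zero_mul, add_zero, sub_zero, zero_im] at this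
    linarith [mem_UHP.1 hz, mem_UHP.1 hw]

theorem differentiableOn_slitMap (ht : 0 ≤ t) : DifferentiableOn ℂ (slitMap a t) UHP := by
  intro z hz
  have := two_mul_sub_sq_mem_slitPlane (a := a) ht hz
  unfold slitMap
  fun_prop (disch := assumption)

theorem slitMap_sub_self_mul (a t : ℝ) (z : ℂ) :
    (slitMap a t z - z) * (slitMap a t z + z - 2 * a) = -(2 * t) := by
  linear_combination slitMap_sub_sq a t z

theorem norm_slitMap_sub_self_le (ht : 0 ≤ t) (hz : z ∈ UHP) :
    ‖slitMap a t z - z‖ ≤ 2 * t / z.im := by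
  have hz' : 0 < z.im := hz
  have hlow : z.im ≤ ‖slitMap a t z + z - 2 * a‖ := by
    refine le_trans ?_ (im_le_norm _)
    have := mapsTo_slitMap (a := a) ht hz
    simp only [mem_UHP] at this
    simpa using this.le
  rw [le_div_iff₀ hz']
  calc ‖slitMap a t z - z‖ * z.im ≤ ‖slitMap a t z - z‖ * ‖slitMap a t z + z - 2 * a‖ :=
        mul_le_mul_of_nonneg_left hlow (norm_nonneg _)
    _ = 2 * t := by rw [← norm_mul, slitMap_sub_self_mul]; simp [ht]

theorem angularLimitAtInfty_slitMap (ht : 0 ≤ t) :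
    AngularLimitAtInfty (fun z => z * (slitMap a t z - z)) (-t : ℝ) := by
  refine angularLimitAtInfty_iff.2 fun δ hδ hδ' => ?_
  have hE : Tendsto (fun z => slitMap a t z - z) (sectorAtInfty δ) (𝓝 0) := by
    have := (tendsto_im_sectorAtInfty hδ (by linarith)).inv_tendsto_atTop.const_mul (2 * t)
    rw [mul_zero] at this
    refine squeeze_zero_norm' ?_ this
    filter_upwards [mem_inf_of_right (mem_principal_self _)] with z hz
    simpa [div_eq_mul_inv] using norm_slitMap_sub_self_le ht hz.1
  -- for `E = slitMap a t z - z`, `slitMap_sub_self_mul` solved for `z E` is `-t + E (a - E / 2)`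
  have h := (hE.mul ((tendsto_const_nhds (x := (a : ℂ))).sub (hE.div_const 2))).const_add (-t : ℂ)
  rw [zero_mul, add_zero, ← ofReal_neg] at h
  refine h.congr fun z => ?_
  push_cast
  linear_combination (-1 / 2 : ℂ) * slitMap_sub_self_mul a t z

theorem memHu_slitMap (ht : 0 ≤ t) : MemHu (slitMap a t) :=
  ⟨differentiableOn_slitMap ht, mapsTo_slitMap ht, injOn_slitMap, -t,
    angularLimitAtInfty_slitMap ht⟩

theorem slitMap_eq_of_sq_sub_sq {w : ℂ} (hw : w ∈ UHP) (h : (z - a) ^ 2 - (w - a) ^ 2 = 2 * t) :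
    slitMap a t z = w := by
  have hre : 0 < (-I * (w - a)).re := by simpa using hw
  rw [slitMap, show 2 * (t : ℂ) - (z - a) ^ 2 = (-I * (w - a)) ^ 2 by
    linear_combination (-1 : ℂ) * h - (w - a) ^ 2 * I_sq, sq_cpow_two_inv hre]
  linear_combination (-(w - a)) * I_sq

end slitMap

theorem exists_sq_sub_sq_eq {z w : ℂ} (hz : 0 < z.im) (hzw : z.im < w.im) :
    ∃ a t : ℝ, 0 < t ∧ (z - a) ^ 2 - (w - a) ^ 2 = 2 * t := by
  -- `a` makes `(z - a)² - (w - a)²` real; it is then positive because `Im z < Im w`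
  set a := (z.re * z.im - w.re * w.im) / (z.im - w.im)
  have ha : (z.re - a) * z.im = (w.re - a) * w.im := by
    have : z.im - w.im ≠ 0 := by linarith
    simp only [a]
    field_simp
    ring
  have hsq : (w.re - a) ^ 2 * w.im ^ 2 ≤ (z.re - a) ^ 2 * w.im ^ 2 := by
    rw [← mul_pow, ← ha, mul_pow]
    exact mul_le_mul_of_nonneg_left (pow_le_pow_left₀ hz.le hzw.le 2) (sq_nonneg _)
  refine ⟨a, ((z - a) ^ 2 - (w - a) ^ 2).re / 2, ?_, ?_⟩
  · simp only [sub_re, sq, mul_re, sub_im, ofReal_re, ofReal_im, sub_zero]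
    have := le_of_mul_le_mul_right hsq (by nlinarith)
    nlinarith
  · apply Complex.ext
    · simp only [sub_re, mul_re, re_ofNat, im_ofNat, ofReal_re, ofReal_im]
      ring
    · simp only [sub_im, sq, mul_im, sub_re, ofReal_re, ofReal_im, sub_zero, mul_re, re_ofNat,
        im_ofNat]
      linarith

theorem memHu_id : MemHu id :=
  ⟨differentiableOn_id, mapsTo_id _, injOn_id _, 0, fun _ _ _ => by
    simpa using tendsto_const_nhds⟩

/-- For every z₀ ∈ ℍ, the set of values {f(z₀) : f ∈ H_u} equals
{z ∈ ℂ : Im z > Im z₀} ∪ {z₀}. -/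
theorem value_set_Hu (z₀ : ℂ) (hz₀ : z₀ ∈ UHP) :
    {w : ℂ | ∃ f : ℂ → ℂ, MemHu f ∧ f z₀ = w} =
      {z : ℂ | z₀.im < z.im} ∪ {z₀} := by
  ext w
  constructor
  · rintro ⟨f, hf, rfl⟩
    exact hf.im_lt_or_eq hz₀
  · rintro (hw | rfl)
    · obtain ⟨a, t, ht, hsq⟩ := exists_sq_sub_sq_eq hz₀ hw
      exact ⟨slitMap a t, memHu_slitMap ht.le,
        slitMap_eq_of_sq_sub_sq (mem_UHP.2 (hz₀.trans hw)) hsq⟩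
    · exact ⟨id, memHu_id, rfl⟩

end
end

section
/- Let λ > 0, let 0 ≤ τ < 2·√λ and let c ∈ ℝ. Define a sequence (aₙ)_{n≥1} of real numbers by a₁ = c and a_{n+1} = c + τ − 4λ/aₙ. If aₙ > 0 for every n ≥ 1, then c ≥ 4·√λ − τ. -/
open Real

/-- If 0 ≤ τ < 2√λ and the sequence a₁ = c, a_{n+1} = c + τ − 4λ/aₙ is
positive for every n ≥ 1, then c ≥ 4√λ − τ. -/
theorem recursive_sequence_positive_implies_bound (lam τ c : ℝ)
    (hlam : 0 < lam) (hτ0 : 0 ≤ τ) (hτ : τ < 2 * Real.sqrt lam)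
    (a : ℕ → ℝ) (ha1 : a 1 = c)
    (harec : ∀ n : ℕ, 1 ≤ n → a (n + 1) = c + τ - 4 * lam / a n)
    (hpos : ∀ n : ℕ, 1 ≤ n → 0 < a n) :
    4 * Real.sqrt lam - τ ≤ c := by
  by_contra hcon
  push_neg at hcon
  have hs0 : 0 < Real.sqrt lam := Real.sqrt_pos.mpr hlam
  have hs2 : Real.sqrt lam ^ 2 = lam := Real.sq_sqrt hlam.le
  have hc0 : 0 < c := ha1 ▸ hpos 1 le_rfl
  have hct : c + τ < 4 * Real.sqrt lam := by linarith
  have hd : 0 < 4 * lam - (c + τ) ^ 2 / 4 := by nlinarith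
  set d := 4 * lam - (c + τ) ^ 2 / 4 with hdd
  have hr0 : 0 < d / c := div_pos hd hc0
  have claim : ∀ n : ℕ, a (n + 1) ≤ c - n * (d / c) := by
    intro n
    induction n with
    | zero => simp [ha1]
    | succ n ih =>
      have hx : 0 < a (n + 1) := hpos (n + 1) (by omega)
      have hxc : a (n + 1) ≤ c := by nlinarith [ih, mul_nonneg (Nat.cast_nonneg (α := ℝ) n) hr0.le]
      have hrec := harec (n + 1) (by omega)
      have hq : 4 * lam / a (n + 1) * a (n + 1) = 4 * lam := div_mul_cancel₀ _ hx.ne'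
      have hdc : d / c * c = d := div_mul_cancel₀ _ hc0.ne'
      have step : c + τ - 4 * lam / a (n + 1) ≤ a (n + 1) - d / c := by
        nlinarith [sq_nonneg (a (n + 1) - (c + τ) / 2), mul_le_mul_of_nonneg_left hxc hr0.le]
      rw [hrec]
      push_cast
      linarith [ih, step]
  obtain ⟨n, hn⟩ := exists_nat_gt (c / (d / c))
  have hn2 : c < n * (d / c) := by
    calc c = c / (d / c) * (d / c) := (div_mul_cancel₀ _ hr0.ne').symm
    _ < n * (d / c) := by exact mul_lt_mul_of_pos_right hn hr0
  have := claim n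
  have := hpos (n + 1) (by omega)
  linarith
end

section
/- Let 0 ≤ t₀ < T, let λ₁, λ₂ : [t₀,T] → ℝ be continuous with λ₁(t) > 0, λ₂(t) > 0 and λ₁(t) + λ₂(t) = 1 for all t, and let U₁, U₂ : [t₀,T] → ℝ be continuous with U₁(t) < U₂(t) for all t. Fix j ∈ {1,2}. Suppose x : [t₀,T] → ℝ is continuous, x(t) ∉ {U₁(t), U₂(t)} for every t ∈ [t₀,T), x is differentiable on [t₀,T) with x'(t) = 2·λ₁(t)/(x(t) − U₁(t)) + 2·λ₂(t)/(x(t) − U₂(t)) for all t ∈ [t₀,T), and x(T) = U_j(T). Then limsup_{h↓0} |U_j(T) − U_j(T−h)|/√h ≥ 4·√(λ_j(T)). -/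
/-!
Suppose the limsup is below `4 √λ_j(T)`, so that `|U_j(T) - U_j(T - h)| ≤ c √h` for small `h`,
with `c² < 16 κ` and `κ < λ_j(T)`. Near `T` the other slit contributes a bounded term, so in the
backward variable `h` the quantity `φ(h) = ±(x(T) - x(T - h))` satisfies `φ' ≥ 2κ / d - M`, where
`d = |x - U_j| (T - h) ≤ c √h - φ(h)`. If `φ ≥ b √h` near `0`, then `d ≤ (c - b) √h`, and
integrating `φ' ≥ 2κ / ((c - b) √h) - M` improves the rate `b` to anything below `4κ / (c - b)`.
As `b² - c b + 4κ` has no real root, every improvement gains a fixed amount, which contradicts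
the bound `b < c` forced by `d > 0`.
-/

open Filter Set Real Topology

theorem eventually_sub_mul_sqrt_le_of_hasDerivAt {φ φ' : ℝ → ℝ} {k M ε : ℝ} (hε : 0 < ε)
    (hφ : ContinuousWithinAt φ (Ici 0) 0) (hφ0 : φ 0 = 0)
    (hφ' : ∀ᶠ h in 𝓝[>] 0, HasDerivAt φ (φ' h) h)
    (hineq : ∀ᶠ h in 𝓝[>] 0, k / (2 * √h) - M ≤ φ' h) :
    ∀ᶠ h in 𝓝[>] 0, (k - ε) * √h ≤ φ h := by
  obtain ⟨δ, hδ, hδsub⟩ := mem_nhdsGT_iff_exists_Ioo_subset.1 (hφ'.and hineq)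
  set g : ℝ → ℝ := fun h => φ h - (k * √h - M * h)
  have hg' : ∀ h ∈ Ioo 0 δ, HasDerivAt g (φ' h - (k / (2 * √h) - M)) h := fun h hh =>
    ((hδsub hh).1.sub (((hasDerivAt_sqrt hh.1.ne').const_mul k).sub
      ((hasDerivAt_id h).const_mul M))).congr_deriv (by field_simp)
  have hg : MonotoneOn g (Ico 0 δ) := by
    refine monotoneOn_of_hasDerivWithinAt_nonneg (f' := fun h => φ' h - (k / (2 * √h) - M))
      (convex_Ico 0 δ) ?_ ?_ ?_
    · intro h hh
      rcases hh.1.eq_or_lt with rfl | hpos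
      · exact (hφ.sub (by fun_prop)).mono Ico_subset_Ici_self
      · exact (hg' h ⟨hpos, hh.2⟩).continuousAt.continuousWithinAt
    · exact fun h hh => (hg' h (by rwa [interior_Ico] at hh)).hasDerivWithinAt
    · exact fun h hh => sub_nonneg.2 (hδsub (by rwa [interior_Ico] at hh)).2
  have hsmall : ∀ᶠ h in 𝓝[>] 0, M * √h < ε := by
    have : Tendsto (fun h => M * √h) (𝓝[>] 0) (𝓝 0) := by
      simpa using ((continuous_sqrt.tendsto 0).const_mul M).mono_left nhdsWithin_le_nhds
    exact this.eventually_lt_const hε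
  filter_upwards [hsmall, Ioo_mem_nhdsGT hδ] with h hMh hh
  have hgh : g 0 ≤ g h := hg ⟨le_rfl, hδ⟩ ⟨hh.1.le, hh.2⟩ hh.1.le
  have hMh' : M * h ≤ ε * √h := by
    calc M * h = M * √h * √h := by rw [mul_assoc, mul_self_sqrt hh.1.le]
      _ ≤ ε * √h := mul_le_mul_of_nonneg_right hMh.le (sqrt_nonneg h)
  simp only [g, hφ0, sqrt_zero] at hgh
  linarith

theorem lt_of_eventually_mul_sqrt_le {φ ω : ℝ → ℝ} {b c : ℝ}
    (hω : ∀ᶠ h in 𝓝[>] 0, ω h ≤ c * √h) (hgap : ∀ᶠ h in 𝓝[>] 0, φ h < ω h)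
    (hb : ∀ᶠ h in 𝓝[>] 0, b * √h ≤ φ h) : b < c := by
  obtain ⟨h, hbh, hωh, hgaph⟩ := (hb.and (hω.and hgap)).exists
  exact lt_of_mul_lt_mul_right (hbh.trans_lt (hgaph.trans_le hωh)) (sqrt_nonneg h)

section Barrier

variable {φ φ' ω : ℝ → ℝ} {κ M c : ℝ}

/- The rate `b` bounds the gap by `ω - φ ≤ (c - b) √h`, hence `φ' ≥ 2κ / ((c - b) √h) - M`. -/
theorem eventually_four_mul_div_sub_mul_sqrt_le {b ε : ℝ} (hκ : 0 ≤ κ) (hε : 0 < ε)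
    (hφ : ContinuousWithinAt φ (Ici 0) 0) (hφ0 : φ 0 = 0)
    (hω : ∀ᶠ h in 𝓝[>] 0, ω h ≤ c * √h) (hgap : ∀ᶠ h in 𝓝[>] 0, φ h < ω h)
    (hφ' : ∀ᶠ h in 𝓝[>] 0, HasDerivAt φ (φ' h) h)
    (hineq : ∀ᶠ h in 𝓝[>] 0, 2 * κ / (ω h - φ h) - M ≤ φ' h)
    (hb : ∀ᶠ h in 𝓝[>] 0, b * √h ≤ φ h) :
    ∀ᶠ h in 𝓝[>] 0, (4 * κ / (c - b) - ε) * √h ≤ φ h := by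
  have hcb : 0 < c - b := sub_pos.2 (lt_of_eventually_mul_sqrt_le hω hgap hb)
  refine eventually_sub_mul_sqrt_le_of_hasDerivAt (M := M) hε hφ hφ0 hφ' ?_
  filter_upwards [hb, hω, hgap, hineq, self_mem_nhdsWithin]
    with h hbh hωh hgaph hineqh (hpos : 0 < h)
  have hsqrt : 0 < √h := sqrt_pos.2 hpos
  calc 4 * κ / (c - b) / (2 * √h) - M = 2 * κ / ((c - b) * √h) - M := by
        field_simp; ring
    _ ≤ 2 * κ / (ω h - φ h) - M := by
        gcongr
        linarith [sub_mul c b √h]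
    _ ≤ φ' h := hineqh

theorem sixteen_mul_le_sq_of_barrier (hκ : 0 < κ)
    (hφ : ContinuousWithinAt φ (Ici 0) 0) (hφ0 : φ 0 = 0)
    (hω : ∀ᶠ h in 𝓝[>] 0, ω h ≤ c * √h) (hgap : ∀ᶠ h in 𝓝[>] 0, φ h < ω h)
    (hφ' : ∀ᶠ h in 𝓝[>] 0, HasDerivAt φ (φ' h) h)
    (hineq : ∀ᶠ h in 𝓝[>] 0, 2 * κ / (ω h - φ h) - M ≤ φ' h) :
    16 * κ ≤ c ^ 2 := by
  by_contra! hc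
  set S := {b : ℝ | ∀ᶠ h in 𝓝[>] 0, b * √h ≤ φ h}
  have lt_of_mem : ∀ b ∈ S, b < c := fun b => lt_of_eventually_mul_sqrt_le hω hgap
  have base : -1 ∈ S := by
    have := eventually_sub_mul_sqrt_le_of_hasDerivAt (k := 0) (M := M) one_pos hφ hφ0 hφ' <| by
      filter_upwards [hineq, hgap] with h hineqh hgaph
      have : 0 ≤ 2 * κ / (ω h - φ h) := div_nonneg (by positivity) (sub_pos.2 hgaph).le
      rw [zero_div]
      linarith
    show ∀ᶠ h in 𝓝[>] 0, -1 * √h ≤ φ h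
    simpa using this
  have hc1 : 0 < c + 1 := by linarith [lt_of_mem (-1) base]
  -- for `-1 ≤ b < c`: `4κ/(c - b) - b = (b² - c b + 4κ)/(c - b) ≥ (16κ - c²)/(4 (c + 1)) = 2ε`
  obtain ⟨ε, hε, hεc⟩ : ∃ ε > 0, 8 * ε * (c + 1) = 16 * κ - c ^ 2 :=
    ⟨(16 * κ - c ^ 2) / (8 * (c + 1)), div_pos (by linarith) (by linarith), by field_simp⟩
  have hbdd : BddAbove S := ⟨c, fun b hb => (lt_of_mem b hb).le⟩
  -- a rate within `ε` of `sSup S` steps past `sSup S`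
  obtain ⟨b, hb, hβb⟩ := exists_lt_of_lt_csSup ⟨-1, base⟩ (sub_lt_self (sSup S) hε)
  obtain ⟨b', hb', hbb', hb'1⟩ : ∃ b' ∈ S, b ≤ b' ∧ -1 ≤ b' := by
    rcases le_total b (-1) with h | h
    exacts [⟨-1, base, h, le_rfl⟩, ⟨b, hb, le_rfl, h⟩]
  have hcb : 0 < c - b' := sub_pos.2 (lt_of_mem b' hb')
  have hrise : b' + 2 * ε ≤ 4 * κ / (c - b') := by
    rw [le_div_iff₀ hcb]
    nlinarith [sq_nonneg (c - 2 * b')]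
  have := le_csSup hbdd
    (eventually_four_mul_div_sub_mul_sqrt_le hκ.le hε hφ hφ0 hω hgap hφ' hineq hb')
  linarith

end Barrier

theorem eventually_le_mul_sqrt_of_limsup_lt {g : ℝ → ℝ} {c : ℝ}
    (hc : limsup (fun h : ℝ => ((g h / √h : ℝ) : EReal)) (𝓝[>] 0) < c) :
    ∀ᶠ h in 𝓝[>] 0, g h ≤ c * √h := by
  filter_upwards [eventually_lt_of_limsup_lt hc, self_mem_nhdsWithin] with h hlt (hpos : 0 < h)
  rw [EReal.coe_lt_coe_iff, div_lt_iff₀ (sqrt_pos.2 hpos)] at hlt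
  exact hlt.le

theorem tendsto_const_sub_nhdsGT_zero (T : ℝ) :
    Tendsto (fun h => T - h) (𝓝[>] 0) (𝓝[<] T) := by
  refine tendsto_nhdsWithin_iff.2 ⟨?_, ?_⟩
  · simpa using ((continuous_sub_left T).tendsto 0).mono_left nhdsWithin_le_nhds
  · filter_upwards [self_mem_nhdsWithin] with h (hh : 0 < h)
    exact sub_lt_self T hh

theorem four_mul_sqrt_le_limsup_of_barrier {φ φ' ω g : ℝ → ℝ} {l M : ℝ} (hl : 0 < l)
    (hφ : ContinuousWithinAt φ (Ici 0) 0) (hφ0 : φ 0 = 0) (hωg : ∀ h, ω h ≤ g h)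
    (hgap : ∀ᶠ h in 𝓝[>] 0, φ h < ω h) (hφ' : ∀ᶠ h in 𝓝[>] 0, HasDerivAt φ (φ' h) h)
    (hineq : ∀ κ < l, ∀ᶠ h in 𝓝[>] 0, 2 * κ / (ω h - φ h) - M ≤ φ' h) :
    ((4 * √l : ℝ) : EReal) ≤ limsup (fun h : ℝ => ((g h / √h : ℝ) : EReal)) (𝓝[>] 0) := by
  by_contra! hlt
  obtain ⟨c₀, hc₀, hc₀lt⟩ := EReal.lt_iff_exists_real_btwn.1 hlt
  set c := max c₀ 0
  have hc : c ^ 2 < 16 * l := by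
    have : c < 4 * √l := max_lt (EReal.coe_lt_coe_iff.1 hc₀lt) (by positivity)
    calc c ^ 2 < (4 * √l) ^ 2 := pow_lt_pow_left₀ this (le_max_right _ _) two_ne_zero
      _ = 16 * l := by rw [mul_pow, sq_sqrt hl.le]; norm_num
  have hω : ∀ᶠ h in 𝓝[>] 0, ω h ≤ c * √h := by
    filter_upwards [eventually_le_mul_sqrt_of_limsup_lt
      (hc₀.trans_le (EReal.coe_le_coe_iff.2 (le_max_left c₀ 0)))] with h hh
    exact (hωg h).trans hh
  obtain ⟨κ, hcκ, hκ⟩ : ∃ κ, c ^ 2 < 16 * κ ∧ κ < l :=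
    ⟨(c ^ 2 / 16 + l) / 2, by linarith, by linarith⟩
  have := sixteen_mul_le_sq_of_barrier (by nlinarith) hφ hφ0 hω hgap hφ' (hineq κ hκ)
  linarith

theorem IsPreconnected.forall_pos_or_forall_neg {α : Type*} [TopologicalSpace α] {s : Set α}
    {f : α → ℝ} (hs : IsPreconnected s) (hf : ContinuousOn f s) (hne : ∀ t ∈ s, f t ≠ 0) :
    (∀ t ∈ s, 0 < f t) ∨ (∀ t ∈ s, f t < 0) := by
  by_contra! h
  obtain ⟨⟨a, ha, hfa⟩, ⟨b, hb, hfb⟩⟩ := h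
  obtain ⟨t, ht, hft⟩ := hs.intermediate_value ha hb hf ⟨hfa, hfb⟩
  exact hne t ht hft

theorem two_mul_div_mul_sub_le_mul_add {σ d l κ f M : ℝ} (hσ : σ = 1 ∨ σ = -1)
    (hd : 0 < σ * d) (hκ : κ ≤ l) (hf : |f| ≤ M) :
    2 * κ / (σ * d) - M ≤ σ * (2 * l / d + f) := by
  rcases hσ with rfl | rfl
  · rw [one_mul] at hd ⊢
    have : 2 * κ / d ≤ 2 * l / d := by gcongr
    linarith [neg_abs_le f]
  · rw [neg_one_mul] at hd ⊢
    have : 2 * κ / -d ≤ 2 * l / -d := by gcongr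
    rw [div_neg] at this
    linarith [le_abs_self f]

theorem four_mul_sqrt_le_limsup_of_hits {t₀ T : ℝ} (htT : t₀ < T) {lh lo Uh Uo x : ℝ → ℝ}
    (hlh : ContinuousWithinAt lh (Icc t₀ T) T) (hlhT : 0 < lh T)
    (hlo : ContinuousWithinAt lo (Icc t₀ T) T)
    (hUh : ContinuousOn Uh (Icc t₀ T)) (hUo : ContinuousWithinAt Uo (Icc t₀ T) T)
    (hUT : Uh T ≠ Uo T) (hx : ContinuousOn x (Icc t₀ T)) (hxne : ∀ t ∈ Ico t₀ T, x t ≠ Uh t)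
    (hode : ∀ t ∈ Ico t₀ T,
      HasDerivWithinAt x (2 * lh t / (x t - Uh t) + 2 * lo t / (x t - Uo t)) (Icc t₀ T) t)
    (hxT : x T = Uh T) :
    ((4 * √(lh T) : ℝ) : EReal) ≤
      limsup (fun h : ℝ => ((|Uh T - Uh (T - h)| / √h : ℝ) : EReal)) (𝓝[>] 0) := by
  obtain ⟨σ, hσ, hσd⟩ : ∃ σ : ℝ, (σ = 1 ∨ σ = -1) ∧ ∀ t ∈ Ico t₀ T, 0 < σ * (x t - Uh t) := by
    rcases isPreconnected_Ico.forall_pos_or_forall_neg ((hx.sub hUh).mono Ico_subset_Icc_self)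
      (fun t ht => sub_ne_zero.2 (hxne t ht)) with h | h
    exacts [⟨1, Or.inl rfl, by simpa using h⟩, ⟨-1, Or.inr rfl, fun t ht => by simpa using h t ht⟩]
  set f := fun t => 2 * lo t / (x t - Uo t)
  have hf : ContinuousWithinAt f (Icc t₀ T) T :=
    (continuousWithinAt_const.mul hlo).div ((hx T ⟨htT.le, le_rfl⟩).sub hUo)
      (by rw [hxT]; exact sub_ne_zero.2 hUT)
  have hback {p : ℝ → Prop} (hp : ∀ᶠ t in 𝓝[Icc t₀ T] T, p t) : ∀ᶠ h in 𝓝[>] 0, p (T - h) :=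
    (tendsto_const_sub_nhdsGT_zero T).eventually (nhdsWithin_le_of_mem (Icc_mem_nhdsLT htT) hp)
  have hIoo : ∀ᶠ h in 𝓝[>] 0, T - h ∈ Ioo t₀ T :=
    (tendsto_const_sub_nhdsGT_zero T).eventually (Ioo_mem_nhdsLT htT)
  have hgap_eq (h : ℝ) : σ * (Uh T - Uh (T - h)) - σ * (x T - x (T - h))
      = σ * (x (T - h) - Uh (T - h)) := by
    rw [hxT]; ring
  refine four_mul_sqrt_le_limsup_of_barrier (φ := fun h => σ * (x T - x (T - h)))
    (ω := fun h => σ * (Uh T - Uh (T - h)))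
    (φ' := fun h => σ * (2 * lh (T - h) / (x (T - h) - Uh (T - h)) + f (T - h)))
    (M := |f T| + 1) hlhT ?_ (by simp) ?_ ?_ ?_ ?_
  · have hxT' : ContinuousWithinAt x (Iic T) T :=
      (hx T ⟨htT.le, le_rfl⟩).mono_of_mem_nhdsWithin (Icc_mem_nhdsLE htT)
    refine continuousWithinAt_const.mul (continuousWithinAt_const.sub ?_)
    exact hxT'.comp_of_eq (continuous_sub_left T).continuousWithinAt
      (fun h (hh : 0 ≤ h) => show T - h ≤ T by linarith) (sub_zero T)
  · intro h
    calc σ * (Uh T - Uh (T - h)) ≤ |σ * (Uh T - Uh (T - h))| := le_abs_self _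
      _ = |Uh T - Uh (T - h)| := by rcases hσ with rfl | rfl <;> simp [abs_sub_comm]
  · filter_upwards [hIoo] with h ht
    exact sub_pos.1 ((hgap_eq h).symm ▸ hσd _ ⟨ht.1.le, ht.2⟩)
  · filter_upwards [hIoo] with h ht
    have hxd := (hode _ ⟨ht.1.le, ht.2⟩).hasDerivAt (Icc_mem_nhds ht.1 ht.2)
    exact (((hxd.comp_const_sub T h).const_sub (x T)).const_mul σ).congr_deriv
      (by simp only [f, neg_neg])
  · intro κ hκ
    filter_upwards [hIoo, hback (hlh.eventually_const_lt hκ),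
      hback (hf.abs.eventually_lt_const (lt_add_one _))] with h ht hκt hft
    rw [hgap_eq]
    exact two_mul_div_mul_sub_le_mul_add hσ (hσd _ ⟨ht.1.le, ht.2⟩) hκt.le hft.le

theorem two_slit_hitting_implies_large_limsup_general (t₀ T : ℝ)
    (htT : t₀ < T)
    (l₁ l₂ U₁ U₂ : ℝ → ℝ)
    (hl₁c : ContinuousOn l₁ (Set.Icc t₀ T)) (hl₂c : ContinuousOn l₂ (Set.Icc t₀ T))
    (hU₁c : ContinuousOn U₁ (Set.Icc t₀ T)) (hU₂c : ContinuousOn U₂ (Set.Icc t₀ T))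
    (hl₁ : ∀ t ∈ Set.Icc t₀ T, 0 < l₁ t) (hl₂ : ∀ t ∈ Set.Icc t₀ T, 0 < l₂ t)
    (hU : ∀ t ∈ Set.Icc t₀ T, U₁ t < U₂ t)
    (Uj lj : ℝ → ℝ) (hj : (Uj = U₁ ∧ lj = l₁) ∨ (Uj = U₂ ∧ lj = l₂))
    (x : ℝ → ℝ) (hxc : ContinuousOn x (Set.Icc t₀ T))
    (hxne : ∀ t ∈ Set.Ico t₀ T, x t ≠ U₁ t ∧ x t ≠ U₂ t)
    (hode : ∀ t ∈ Set.Ico t₀ T,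
      HasDerivWithinAt x (2 * l₁ t / (x t - U₁ t) + 2 * l₂ t / (x t - U₂ t))
        (Set.Icc t₀ T) t)
    (hxT : x T = Uj T) :
    ((4 * Real.sqrt (lj T) : ℝ) : EReal) ≤
      Filter.limsup
        (fun h : ℝ => ((|Uj T - Uj (T - h)| / Real.sqrt h : ℝ) : EReal))
        (nhdsWithin 0 (Set.Ioi 0)) := by
  have hT : T ∈ Icc t₀ T := right_mem_Icc.2 htT.le
  rcases hj with ⟨rfl, rfl⟩ | ⟨rfl, rfl⟩
  · exact four_mul_sqrt_le_limsup_of_hits htT (hl₁c T hT) (hl₁ T hT) (hl₂c T hT) hU₁c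
      (hU₂c T hT) (hU T hT).ne hxc (fun t ht => (hxne t ht).1) hode hxT
  · exact four_mul_sqrt_le_limsup_of_hits htT (hl₂c T hT) (hl₂ T hT) (hl₁c T hT) hU₂c
      (hU₁c T hT) (hU T hT).ne' hxc (fun t ht => (hxne t ht).2)
      (fun t ht => (hode t ht).congr_deriv (add_comm _ _)) hxT

/-- If a real solution x of the chordal two-slit Loewner ODE
x' = 2λ₁/(x − U₁) + 2λ₂/(x − U₂) on [t₀,T), started off the singularities,
hits the driving function U_j exactly at time T, then
limsup_{h↓0} |U_j(T) − U_j(T−h)|/√h ≥ 4·√(λ_j(T)). -/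
theorem two_slit_hitting_implies_large_limsup (t₀ T : ℝ)
    (ht₀ : 0 ≤ t₀) (htT : t₀ < T)
    (l₁ l₂ U₁ U₂ : ℝ → ℝ)
    (hl₁c : ContinuousOn l₁ (Set.Icc t₀ T)) (hl₂c : ContinuousOn l₂ (Set.Icc t₀ T))
    (hU₁c : ContinuousOn U₁ (Set.Icc t₀ T)) (hU₂c : ContinuousOn U₂ (Set.Icc t₀ T))
    (hl₁ : ∀ t ∈ Set.Icc t₀ T, 0 < l₁ t) (hl₂ : ∀ t ∈ Set.Icc t₀ T, 0 < l₂ t)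
    (hsum : ∀ t ∈ Set.Icc t₀ T, l₁ t + l₂ t = 1)
    (hU : ∀ t ∈ Set.Icc t₀ T, U₁ t < U₂ t)
    (Uj lj : ℝ → ℝ) (hj : (Uj = U₁ ∧ lj = l₁) ∨ (Uj = U₂ ∧ lj = l₂))
    (x : ℝ → ℝ) (hxc : ContinuousOn x (Set.Icc t₀ T))
    (hxne : ∀ t ∈ Set.Ico t₀ T, x t ≠ U₁ t ∧ x t ≠ U₂ t)
    (hode : ∀ t ∈ Set.Ico t₀ T,
      HasDerivWithinAt x (2 * l₁ t / (x t - U₁ t) + 2 * l₂ t / (x t - U₂ t))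
        (Set.Icc t₀ T) t)
    (hxT : x T = Uj T) :
    ((4 * Real.sqrt (lj T) : ℝ) : EReal) ≤
      Filter.limsup
        (fun h : ℝ => ((|Uj T - Uj (T - h)| / Real.sqrt h : ℝ) : EReal))
        (nhdsWithin 0 (Set.Ioi 0)) :=
  two_slit_hitting_implies_large_limsup_general t₀ T htT l₁ l₂ U₁ U₂ hl₁c hl₂c hU₁c hU₂c hl₁ hl₂ hU
    Uj lj hj x hxc hxne hode hxT
end

section
/- Let 0 ≤ t₀ < T, let λ₁, λ₂ : [t₀,T] → ℝ be continuous with λ₁(t) > 0, λ₂(t) > 0 and λ₁(t) + λ₂(t) = 1 for all t, and let U₁, U₂ : [t₀,T] → ℝ be continuous with U₁(t) < U₂(t) for all t. Assume that for every t ∈ (t₀,T] and each j ∈ {1,2}, limsup_{h↓0} |U_j(t) − U_j(t−h)|/√h < 4·√(λ_j(t)). Then there exists ε > 0, independent of the initial value, such that every continuous x : [t₀,T] → ℝ with x(t₀) ∉ {U₁(t₀), U₂(t₀)}, with x(t) ∉ {U₁(t), U₂(t)} for all t ∈ [t₀,T), and differentiable on [t₀,T) with x'(t) = 2·λ₁(t)/(x(t)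 − U₁(t)) + 2·λ₂(t)/(x(t) − U₂(t)), satisfies |x(T) − U₁(T)| > ε and |x(T) − U₂(T)| > ε. -/
/-!
Everything happens near the terminal time `T`. Pick `c < 4 √λ(T)` bounding the left
½-Hölder quotient of `U` at `T`, and `κ` with `c² / 16 < κ < λ(T)`. Near `T` the solution is
repelled from its nearby slit at rate at least `2κ / dist`, the other slit's bounded push being
absorbed by `λ - κ`. In the variable `s = √(T - t)`, the gap `ψ(s) = c s - (x(T - s²) - U(T))`
to the barrier `U(T) + c s` then makes `(ψ / s)² / 2 + (4κ - c² / 4) log s` nonincreasing.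
Comparing its values at `s = √H`, for a short final window `[T - H, T]`, and at
`s ≈ |x(T) - U(T)|` gives
`|x(T) - U(T)| ≥ √H · exp (-(c + 1)² / (2 (4κ - c² / 4)))`, whatever the initial value.
-/

open Filter Set Real Topology

noncomputable section

theorem left_le_of_hasDerivAt_pos_above {w : ℝ → ℝ} {a p q : ℝ}
    (hw : ContinuousOn w (Icc p q)) (ha : a < w p)
    (hw' : ∀ s ∈ Ioo p q, a < w s → ∃ W, HasDerivAt w W s ∧ 0 < W) :
    ∀ s ∈ Icc p q, w p ≤ w s := by
  intro s₁ hs₁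
  by_contra! hlt
  set b := max (w s₁) ((a + w p) / 2)
  have hab : a < b := lt_max_of_lt_right (by linarith)
  have hbp : b < w p := max_lt hlt (by linarith)
  -- `s₂` is the first time at which `w` drops to level `b`
  set S := Icc p s₁ ∩ w ⁻¹' Iic b
  have hbdd : BddBelow S := ⟨p, fun y hy => hy.1.1⟩
  have hs₂S : sInf S ∈ S :=
    ((hw.mono (Icc_subset_Icc_right hs₁.2)).preimage_isClosed_of_isClosed isClosed_Icc
      isClosed_Iic).csInf_mem ⟨s₁, ⟨hs₁.1, le_rfl⟩, (le_max_left _ _ : w s₁ ≤ b)⟩ hbdd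
  set s₂ := sInf S
  have hs₂q : s₂ ≤ q := hs₂S.1.2.trans hs₁.2
  have hps₂ : p < s₂ := hs₂S.1.1.lt_of_ne fun h => by
    have : w s₂ ≤ b := hs₂S.2
    rw [← h] at this
    linarith
  have habove : ∀ s ∈ Ico p s₂, b < w s := fun s hs => not_le.1 fun hle =>
    (csInf_le hbdd ⟨⟨hs.1, hs.2.le.trans hs₂S.1.2⟩, hle⟩).not_gt hs.2
  have hmono : StrictMonoOn w (Icc p s₂) := by
    refine strictMonoOn_of_deriv_pos (convex_Icc p s₂) (hw.mono (Icc_subset_Icc_right hs₂q))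
      fun s hs => ?_
    rw [interior_Icc] at hs
    obtain ⟨W, hW, hW0⟩ := hw' s ⟨hs.1, hs.2.trans_le hs₂q⟩
      (hab.trans (habove s ⟨hs.1.le, hs.2⟩))
    rwa [hW.deriv]
  have hb₂ : w s₂ ≤ b := hs₂S.2
  linarith [hmono (left_mem_Icc.2 hps₂.le) (right_mem_Icc.2 hps₂.le) hps₂]

def repulsionLyapunov (c κ : ℝ) (φ : ℝ → ℝ) (s : ℝ) : ℝ :=
  (c * s - φ s) ^ 2 / (2 * s ^ 2) + (4 * κ - c ^ 2 / 4) * Real.log s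

theorem hasDerivAt_repulsionLyapunov {c κ s Φ : ℝ} {φ : ℝ → ℝ} (hs : s ≠ 0)
    (hφ : HasDerivAt φ Φ s) :
    HasDerivAt (repulsionLyapunov c κ φ) ((c * s - φ s) * (c - Φ) / s ^ 2 -
      (c * s - φ s) ^ 2 / s ^ 3 + (4 * κ - c ^ 2 / 4) / s) s := by
  have hψ : HasDerivAt (fun u => c * u - φ u) (c - Φ) s := by
    simpa using ((hasDerivAt_id s).const_mul c).fun_sub hφ
  have hden : HasDerivAt (fun u : ℝ => 2 * u ^ 2) (2 * (2 * s)) s := by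
    simpa using (hasDerivAt_pow 2 s).const_mul 2
  refine (((hψ.fun_pow 2).fun_div hden (by positivity)).fun_add
    ((Real.hasDerivAt_log hs).const_mul (4 * κ - c ^ 2 / 4))).congr_deriv ?_
  field_simp
  ring

theorem repulsionLyapunov_deriv_nonpos {c κ s ψ Φ : ℝ} (hs : 0 < s) (hΦ : 4 * κ * s ≤ Φ * ψ) :
    ψ * (c - Φ) / s ^ 2 - ψ ^ 2 / s ^ 3 + (4 * κ - c ^ 2 / 4) / s ≤ 0 := by
  rw [show ψ * (c - Φ) / s ^ 2 - ψ ^ 2 / s ^ 3 + (4 * κ - c ^ 2 / 4) / s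
      = (s * (4 * κ * s - Φ * ψ) - (ψ - c * s / 2) ^ 2) / s ^ 3 by field_simp; ring]
  exact div_nonpos_of_nonpos_of_nonneg
    (by nlinarith [sq_nonneg (ψ - c * s / 2), mul_nonneg hs.le (sub_nonneg.2 hΦ)]) (by positivity)

theorem antitoneOn_repulsionLyapunov {c κ a b : ℝ} {φ : ℝ → ℝ} (ha : 0 < a)
    (hφc : ContinuousOn φ (Icc a b))
    (hφ' : ∀ s ∈ Ioo a b, ∃ Φ, HasDerivAt φ Φ s ∧ 4 * κ * s ≤ Φ * (c * s - φ s)) :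
    AntitoneOn (repulsionLyapunov c κ φ) (Icc a b) := by
  have hpos : ∀ s ∈ Icc a b, s ≠ 0 := fun s hs => (ha.trans_le hs.1).ne'
  refine antitoneOn_of_deriv_nonpos (convex_Icc a b) ?_ ?_ ?_
  · refine ((((continuousOn_const.mul continuousOn_id).sub hφc).pow 2).div
      (continuousOn_const.mul (continuousOn_pow 2)) fun s hs => ?_).add
      (continuousOn_const.mul (Real.continuousOn_log.mono fun s hs => hpos s hs))
    simpa using hpos s hs
  all_goals
    intro s hs
    rw [interior_Icc] at hs
    obtain ⟨Φ, hΦ, hΦle⟩ := hφ' s hs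
    have hD := hasDerivAt_repulsionLyapunov (c := c) (κ := κ) (ha.trans hs.1).ne' hΦ
  · exact hD.differentiableAt.differentiableWithinAt
  · rw [hD.deriv]
    exact repulsionLyapunov_deriv_nonpos (ha.trans hs.1) hΦle

theorem mul_exp_le_of_repelled {c κ S ε : ℝ} {φ : ℝ → ℝ} (hm : 0 < 4 * κ - c ^ 2 / 4)
    (hS : 0 < S) (hφc : ContinuousOn φ (Icc 0 S)) (hφ0 : φ 0 = -ε)
    (hφlt : ∀ s ∈ Ioo 0 S, φ s < c * s)
    (hφ' : ∀ s ∈ Ioo 0 S, -S < φ s → ∃ Φ, HasDerivAt φ Φ s ∧ 4 * κ * s ≤ Φ * (c * s - φ s)) :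
    S * exp (-((c + 1) ^ 2 / (2 * (4 * κ - c ^ 2 / 4)))) ≤ ε := by
  have hκ : 0 < κ := by nlinarith [sq_nonneg c]
  set m := 4 * κ - c ^ 2 / 4
  set K := (c + 1) ^ 2 / (2 * m)
  by_contra! hlt
  have hSK : S * exp (-K) ≤ S :=
    mul_le_of_le_one_right hS.le (exp_le_one_iff.2 (neg_nonpos.2 (by positivity)))
  have hge : ∀ s ∈ Icc 0 S, -ε ≤ φ s := by
    rw [← hφ0]
    refine left_le_of_hasDerivAt_pos_above (a := -S) hφc (by linarith) fun s hs hφs => ?_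
    obtain ⟨Φ, hΦ, hΦle⟩ := hφ' s hs hφs
    exact ⟨Φ, hΦ, pos_of_mul_pos_left ((mul_pos (by positivity) hs.1).trans_le hΦle)
      (sub_pos.2 (hφlt s hs)).le⟩
  obtain ⟨s₁, hs₁, hs₁S⟩ := exists_between (max_lt hlt (by positivity : 0 < S * exp (-K)))
  have hs₁0 : 0 < s₁ := (le_max_right _ _).trans_lt hs₁
  have hεs₁ : ε < s₁ := (le_max_left _ _).trans_lt hs₁
  have hs₁S' : s₁ < S := hs₁S.trans_le hSK
  have hQ : repulsionLyapunov c κ φ S ≤ repulsionLyapunov c κ φ s₁ := by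
    refine antitoneOn_repulsionLyapunov hs₁0 (hφc.mono (Icc_subset_Icc_left hs₁0.le))
      (fun s hs => hφ' s ⟨hs₁0.trans hs.1, hs.2⟩ ?_) (left_mem_Icc.2 hs₁S'.le)
      (right_mem_Icc.2 hs₁S'.le) hs₁S'.le
    linarith [hge s ⟨(hs₁0.trans hs.1).le, hs.2.le⟩]
  have hQS : m * log S ≤ repulsionLyapunov c κ φ S :=
    le_add_of_nonneg_left (by positivity)
  have hQs₁ : repulsionLyapunov c κ φ s₁ ≤ (c + 1) ^ 2 / 2 + m * log s₁ := by
    have hψ : c * s₁ - φ s₁ ≤ (c + 1) * s₁ := by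
      linarith [hge s₁ ⟨hs₁0.le, hs₁S'.le⟩]
    have hψ0 : 0 < c * s₁ - φ s₁ := sub_pos.2 (hφlt s₁ ⟨hs₁0, hs₁S'⟩)
    refine add_le_add ?_ le_rfl
    rw [div_le_div_iff₀ (mul_pos two_pos (pow_pos hs₁0 2)) two_pos]
    nlinarith [mul_le_mul hψ hψ hψ0.le (hψ0.le.trans hψ)]
  have hlog : log S - K ≤ log s₁ := by
    have : log S - log s₁ ≤ K := by
      rw [le_div_iff₀ (by positivity)]
      nlinarith
    linarith
  have : S * exp (-K) ≤ s₁ := by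
    calc S * exp (-K) = exp (log S - K) := by rw [exp_sub, exp_log hS, div_eq_mul_inv, exp_neg]
      _ ≤ exp (log s₁) := exp_le_exp.2 hlog
      _ = s₁ := exp_log hs₁0
  linarith

theorem sqrt_mul_exp_le_sub_of_repelled {T c κ H : ℝ} {x U : ℝ → ℝ} (hc : 0 ≤ c)
    (hm : 0 < 4 * κ - c ^ 2 / 4) (hH : 0 < H)
    (hU : ∀ h ∈ Ioo 0 H, U (T - h) - U T ≤ c * √h)
    (hxc : ContinuousOn x (Icc (T - H) T)) (hxU : ∀ t ∈ Ioo (T - H) T, x t < U t)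
    (hx' : ∀ t ∈ Ioo (T - H) T, U t - x t ≤ (c + 1) * √H →
      ∃ D, HasDerivAt x D t ∧ 2 * κ ≤ -D * (U t - x t)) :
    √H * exp (-((c + 1) ^ 2 / (2 * (4 * κ - c ^ 2 / 4)))) ≤ U T - x T := by
  have hS : 0 < √H := sqrt_pos.2 hH
  have hsq : ∀ s ∈ Icc 0 √H, s ^ 2 ≤ H := fun s hs => by
    simpa [sq_sqrt hH.le] using pow_le_pow_left₀ hs.1 hs.2 2
  have hmem : ∀ s ∈ Ioo 0 √H, T - s ^ 2 ∈ Ioo (T - H) T := fun s hs =>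
    ⟨by linarith [(sq_lt_sq₀ hs.1.le hS.le).2 hs.2, sq_sqrt hH.le],
      by linarith [pow_pos hs.1 2]⟩
  have hUs : ∀ s ∈ Ioo 0 √H, U (T - s ^ 2) ≤ U T + c * s := fun s hs => by
    have := hU (s ^ 2) ⟨pow_pos hs.1 2, by linarith [(hmem s hs).1]⟩
    rw [sqrt_sq hs.1.le] at this
    linarith
  refine mul_exp_le_of_repelled (φ := fun s => x (T - s ^ 2) - U T) hm hS ?_ (by simp) ?_ ?_
  · refine (hxc.comp (by fun_prop) fun s hs => ?_).sub continuousOn_const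
    exact ⟨by linarith [hsq s hs], by linarith [pow_two_nonneg s]⟩
  · intro s hs
    linarith [hxU _ (hmem s hs), hUs s hs]
  · intro s hs hφs
    have hnear : U (T - s ^ 2) - x (T - s ^ 2) ≤ (c + 1) * √H := by
      nlinarith [hUs s hs, mul_le_mul_of_nonneg_left hs.2.le hc]
    obtain ⟨D, hD, hDle⟩ := hx' _ (hmem s hs) hnear
    have hdist := hxU _ (hmem s hs)
    refine ⟨D * -(2 * s), (hD.comp s ((hasDerivAt_pow 2 s).const_sub T |>.congr_deriv
      (by ring))).sub_const (U T), ?_⟩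
    have hD0 : 0 ≤ -D := by
      nlinarith [hm, sq_nonneg c]
    nlinarith [mul_le_mul_of_nonneg_left (hUs s hs) hD0, hs.1]

theorem exists_lt_eventually_lt_of_limsup_lt {α : Type*} {f : Filter α} {g : α → ℝ} {r : ℝ}
    (h : limsup (fun a => (g a : EReal)) f < r) : ∃ c : ℝ, c < r ∧ ∀ᶠ a in f, g a < c := by
  obtain ⟨c, hgc, hcr⟩ := EReal.lt_iff_exists_real_btwn.1 h
  exact ⟨c, EReal.coe_lt_coe_iff.1 hcr,
    (eventually_lt_of_limsup_lt hgc).mono fun _ ha => EReal.coe_lt_coe_iff.1 ha⟩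

theorem exists_le_mul_sqrt_of_limsup_lt {g : ℝ → ℝ} {r : ℝ} (hr : 0 < r)
    (h : limsup (fun h => ((g h / √h : ℝ) : EReal)) (𝓝[>] 0) < r) :
    ∃ c δ : ℝ, 0 ≤ c ∧ c < r ∧ 0 < δ ∧ ∀ h ∈ Ioo 0 δ, g h ≤ c * √h := by
  obtain ⟨c, hcr, hev⟩ := exists_lt_eventually_lt_of_limsup_lt h
  obtain ⟨δ, hδ, hsub⟩ := mem_nhdsGT_iff_exists_Ioo_subset.1 (hev.and eventually_mem_nhdsWithin)
  refine ⟨max c 0, δ, le_max_right _ _, max_lt hcr hr, hδ, fun h hh => ?_⟩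
  obtain ⟨hgh, hh0⟩ := hsub hh
  rw [div_lt_iff₀ (sqrt_pos.2 hh0)] at hgh
  exact hgh.le.trans (mul_le_mul_of_nonneg_right (le_max_left _ _) (sqrt_nonneg h))

theorem two_mul_le_two_slit_drift_mul {κ l l' a b G : ℝ} (ha : a ≠ 0) (hl' : 0 ≤ l')
    (hl'1 : l' ≤ 1) (haG : 2 * |a| ≤ G) (hal : 2 * |a| ≤ (l - κ) * G) (hab : G ≤ |a - b|) :
    2 * κ ≤ (2 * l / a + 2 * l' / b) * a := by
  have hb : G / 2 ≤ |b| := by linarith [abs_sub a b]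
  have hG : 0 < G := lt_of_lt_of_le (by positivity) haG
  -- the far slit pushes by at most `2 l' / |b| ≤ 4 / G`, which the excess `l - κ` absorbs
  have hfar : |2 * l' / b * a| ≤ 2 * (l - κ) := by
    rw [abs_mul, abs_div, abs_of_nonneg (by positivity : 0 ≤ 2 * l'), div_mul_eq_mul_div,
      div_le_iff₀ (by linarith)]
    have hlκ : 0 ≤ l - κ :=
      nonneg_of_mul_nonneg_left ((by positivity : 0 ≤ 2 * |a|).trans hal) hG
    nlinarith [mul_le_mul_of_nonneg_right hl'1 (abs_nonneg a),
      mul_le_mul_of_nonneg_left hb hlκ]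
  rw [add_mul, div_mul_cancel₀ _ ha]
  linarith [neg_abs_le (2 * l' / b * a)]

theorem sqrt_mul_exp_le_abs_sub_of_two_slit {T G c κ μ H : ℝ} {l l' U U' x : ℝ → ℝ}
    (hc : 0 ≤ c) (hm : 0 < 4 * κ - c ^ 2 / 4) (hH : 0 < H) (hHG : 2 * ((c + 1) * √H) ≤ G)
    (hHμ : 2 * ((c + 1) * √H) ≤ (μ - κ) * G) (hl : ∀ t ∈ Ioo (T - H) T, μ ≤ l t)
    (hl' : ∀ t ∈ Ioo (T - H) T, 0 ≤ l' t ∧ l' t ≤ 1)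
    (hgap : ∀ t ∈ Ioo (T - H) T, G ≤ |U t - U' t|)
    (hU : ∀ h ∈ Ioo 0 H, |U T - U (T - h)| ≤ c * √h)
    (hUc : ContinuousOn U (Icc (T - H) T)) (hxc : ContinuousOn x (Icc (T - H) T))
    (hxU : ∀ t ∈ Ioo (T - H) T, x t ≠ U t)
    (hx' : ∀ t ∈ Ioo (T - H) T,
      HasDerivAt x (2 * l t / (x t - U t) + 2 * l' t / (x t - U' t)) t) :
    √H * exp (-((c + 1) ^ 2 / (2 * (4 * κ - c ^ 2 / 4)))) ≤ |x T - U T| := by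
  obtain ⟨σ, hσ, hσx⟩ : ∃ σ : ℝ, |σ| = 1 ∧ ∀ t ∈ Ioo (T - H) T, 0 < σ * (x t - U t) := by
    rcases isPreconnected_Ioo.mapsTo_Ioi_or_Iio ((hxc.sub hUc).mono Ioo_subset_Icc_self)
      fun t ht => sub_ne_zero.2 (hxU t ht) with h | h
    · exact ⟨1, abs_one, fun t ht => by simpa using h ht⟩
    · exact ⟨-1, by simp, fun t ht => by simpa using h ht⟩
  have hσσ : σ * σ = 1 := by rw [← abs_mul_abs_self, hσ, one_mul]
  have hσle : ∀ y, σ * y ≤ |y| := fun y =>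
    (le_abs_self _).trans_eq (by rw [abs_mul, hσ, one_mul])
  have hG : 0 < G := lt_of_lt_of_le (by positivity) hHG
  -- in the frame `t ↦ -σ x t`, the solution sits below the slit and is pushed away from it
  refine (sqrt_mul_exp_le_sub_of_repelled (x := fun t => -σ * x t) (U := fun t => -σ * U t)
    hc hm hH (fun h hh => ?_) (continuousOn_const.mul hxc)
    (fun t ht => by nlinarith [hσx t ht]) (fun t ht hd => ?_)).trans ?_
  · linarith [hσle (U T - U (T - h)), hU h hh]
  · have habs : |x t - U t| = σ * (x t - U t) := by
      rw [← one_mul |x t - U t|, ← hσ, ← abs_mul, abs_of_pos (hσx t ht)]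
    refine ⟨_, (hx' t ht).const_mul (-σ), ?_⟩
    have hfar : G ≤ |x t - U t - (x t - U' t)| := by
      rw [sub_sub_sub_cancel_left, abs_sub_comm]
      exact hgap t ht
    have := two_mul_le_two_slit_drift_mul (κ := κ) (l := l t) (sub_ne_zero.2 (hxU t ht))
      (hl' t ht).1 (hl' t ht).2 (by linarith) (by nlinarith [hl t ht]) hfar
    linear_combination
      this - (2 * l t / (x t - U t) + 2 * l' t / (x t - U' t)) * (x t - U t) * hσσ
  · linarith [hσle (x T - U T)]

theorem exists_pos_le_abs_sub_at_end {t₀ T G : ℝ} {l l' U U' : ℝ → ℝ} (htT : t₀ < T)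
    (hG : 0 < G) (hlc : ContinuousOn l (Icc t₀ T)) (hlT : 0 < l T)
    (hl' : ∀ t ∈ Icc t₀ T, 0 ≤ l' t ∧ l' t ≤ 1) (hUc : ContinuousOn U (Icc t₀ T))
    (hgap : ∀ t ∈ Icc t₀ T, G ≤ |U t - U' t|)
    (hhold : limsup (fun h => ((|U T - U (T - h)| / √h : ℝ) : EReal)) (𝓝[>] 0) <
      ((4 * √(l T) : ℝ) : EReal)) :
    ∃ ε > 0, ∀ x : ℝ → ℝ, ContinuousOn x (Icc t₀ T) → (∀ t ∈ Ioo t₀ T, x t ≠ U t) →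
      (∀ t ∈ Ioo t₀ T, HasDerivAt x (2 * l t / (x t - U t) + 2 * l' t / (x t - U' t)) t) →
      ε ≤ |x T - U T| := by
  obtain ⟨c, δ, hc, hc4, hδ, hU⟩ := exists_le_mul_sqrt_of_limsup_lt (by positivity) hhold
  have hc16 : c ^ 2 / 16 < l T := by nlinarith [sq_sqrt hlT.le, sqrt_nonneg (l T)]
  obtain ⟨κ, hcκ, hκl⟩ := exists_between hc16
  obtain ⟨μ, hκμ, hμl⟩ := exists_between hκl
  have hm : 0 < 4 * κ - c ^ 2 / 4 := by linarith
  obtain ⟨u, hu, hlu⟩ : ∃ u < T, Ioo u T ⊆ {t | μ < l t} := by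
    refine mem_nhdsLT_iff_exists_Ioo_subset.1 ?_
    rw [← nhdsWithin_Ioo_eq_nhdsLT htT]
    exact nhdsWithin_mono _ Ioo_subset_Icc_self
      ((hlc T (right_mem_Icc.2 htT.le)).eventually (lt_mem_nhds hμl))
  have hsqrt : Tendsto (fun H => 2 * ((c + 1) * √H)) (𝓝[>] 0) (𝓝 0) := by
    simpa using (((continuous_sqrt.tendsto 0).const_mul (c + 1)).const_mul 2).mono_left
      nhdsWithin_le_nhds
  have hsmall : ∀ {a : ℝ}, 0 < a → ∀ᶠ H in 𝓝[>] 0, H ≤ a := fun ha =>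
    nhdsWithin_le_nhds (eventually_le_nhds ha)
  obtain ⟨H, hH, hHt₀, hHδ, hHu, hHG⟩ : ∃ H, 0 < H ∧ H ≤ T - t₀ ∧ H ≤ δ ∧ H ≤ T - u ∧
      2 * ((c + 1) * √H) < min G ((μ - κ) * G) := by
    have hGμ : 0 < min G ((μ - κ) * G) := lt_min hG (mul_pos (sub_pos.2 hκμ) hG)
    refine Eventually.exists (f := 𝓝[>] 0) ?_
    filter_upwards [self_mem_nhdsWithin, hsmall (sub_pos.2 htT), hsmall hδ,
      hsmall (sub_pos.2 hu), hsqrt.eventually_lt_const hGμ] with H h₁ h₂ h₃ h₄ h₅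
    exact ⟨h₁, h₂, h₃, h₄, h₅⟩
  have hIoo : Ioo (T - H) T ⊆ Ioo t₀ T := Ioo_subset_Ioo_left (by linarith)
  have hIcc : Icc (T - H) T ⊆ Icc t₀ T := Icc_subset_Icc_left (by linarith)
  refine ⟨_, mul_pos (sqrt_pos.2 hH) (exp_pos _), fun x hxc hxU hx' =>
    sqrt_mul_exp_le_abs_sub_of_two_slit hc hm hH (le_min_iff.1 hHG.le).1
      (le_min_iff.1 hHG.le).2 (fun t ht => (hlu (Ioo_subset_Ioo_left (by linarith) ht)).le)
      (fun t ht => hl' t (Ioo_subset_Icc_self (hIoo ht)))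
      (fun t ht => hgap t (Ioo_subset_Icc_self (hIoo ht)))
      (fun h hh => hU h ⟨hh.1, hh.2.trans_le hHδ⟩) (hUc.mono hIcc) (hxc.mono hIcc)
      (fun t ht => hxU t (hIoo ht)) (fun t ht => hx' t (hIoo ht))⟩

theorem two_slit_uniform_separation_general (t₀ T : ℝ)
    (htT : t₀ < T)
    (l₁ l₂ U₁ U₂ : ℝ → ℝ)
    (hl₁c : ContinuousOn l₁ (Set.Icc t₀ T)) (hl₂c : ContinuousOn l₂ (Set.Icc t₀ T))
    (hU₁c : ContinuousOn U₁ (Set.Icc t₀ T)) (hU₂c : ContinuousOn U₂ (Set.Icc t₀ T))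
    (hl₁ : ∀ t ∈ Set.Icc t₀ T, 0 < l₁ t) (hl₂ : ∀ t ∈ Set.Icc t₀ T, 0 < l₂ t)
    (hsum : ∀ t ∈ Set.Icc t₀ T, l₁ t + l₂ t = 1)
    (hU : ∀ t ∈ Set.Icc t₀ T, U₁ t < U₂ t)
    (hhold₁ : ∀ t ∈ Set.Ioc t₀ T,
      Filter.limsup
        (fun h : ℝ => ((|U₁ t - U₁ (t - h)| / Real.sqrt h : ℝ) : EReal))
        (nhdsWithin 0 (Set.Ioi 0)) < ((4 * Real.sqrt (l₁ t) : ℝ) : EReal))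
    (hhold₂ : ∀ t ∈ Set.Ioc t₀ T,
      Filter.limsup
        (fun h : ℝ => ((|U₂ t - U₂ (t - h)| / Real.sqrt h : ℝ) : EReal))
        (nhdsWithin 0 (Set.Ioi 0)) < ((4 * Real.sqrt (l₂ t) : ℝ) : EReal)) :
    ∃ ε : ℝ, 0 < ε ∧ ∀ x : ℝ → ℝ,
      ContinuousOn x (Set.Icc t₀ T) →
      (x t₀ ≠ U₁ t₀ ∧ x t₀ ≠ U₂ t₀) →
      (∀ t ∈ Set.Ico t₀ T, x t ≠ U₁ t ∧ x t ≠ U₂ t) →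
      (∀ t ∈ Set.Ico t₀ T,
        HasDerivWithinAt x (2 * l₁ t / (x t - U₁ t) + 2 * l₂ t / (x t - U₂ t))
          (Set.Icc t₀ T) t) →
      ε < |x T - U₁ T| ∧ ε < |x T - U₂ T| := by
  have hT : T ∈ Icc t₀ T := right_mem_Icc.2 htT.le
  obtain ⟨G, hG, hgap⟩ : ∃ G > 0, ∀ t ∈ Icc t₀ T, G ≤ |U₁ t - U₂ t| := by
    obtain ⟨s, hs, hmin⟩ := isCompact_Icc.exists_isMinOn (nonempty_Icc.2 htT.le) (hU₂c.sub hU₁c)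
    exact ⟨_, sub_pos.2 (hU s hs), fun t ht =>
      (hmin ht).trans ((le_abs_self _).trans_eq (abs_sub_comm _ _))⟩
  obtain ⟨ε₁, hε₁, hsep₁⟩ := exists_pos_le_abs_sub_at_end htT hG hl₁c (hl₁ T hT)
    (fun t ht => ⟨(hl₂ t ht).le, by linarith [hsum t ht, hl₁ t ht]⟩) hU₁c hgap
    (hhold₁ T ⟨htT, le_rfl⟩)
  obtain ⟨ε₂, hε₂, hsep₂⟩ := exists_pos_le_abs_sub_at_end htT hG hl₂c (hl₂ T hT)
    (fun t ht => ⟨(hl₁ t ht).le, by linarith [hsum t ht, hl₂ t ht]⟩) hU₂c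
    (fun t ht => abs_sub_comm (U₁ t) (U₂ t) ▸ hgap t ht) (hhold₂ T ⟨htT, le_rfl⟩)
  refine ⟨min ε₁ ε₂ / 2, by positivity, fun x hxc _ hxU hx' => ?_⟩
  have hx : ∀ t ∈ Ioo t₀ T,
      HasDerivAt x (2 * l₁ t / (x t - U₁ t) + 2 * l₂ t / (x t - U₂ t)) t := fun t ht =>
    (hx' t (Ioo_subset_Ico_self ht)).hasDerivAt (Icc_mem_nhds ht.1 ht.2)
  have h₁ := hsep₁ x hxc (fun t ht => (hxU t (Ioo_subset_Ico_self ht)).1) hx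
  have h₂ := hsep₂ x hxc (fun t ht => (hxU t (Ioo_subset_Ico_self ht)).2) fun t ht =>
    add_comm (2 * l₁ t / (x t - U₁ t)) _ ▸ hx t ht
  constructor <;> linarith [min_le_left ε₁ ε₂, min_le_right ε₁ ε₂]

/-- If the driving functions of the chordal two-slit Loewner ODE satisfy the
pointwise left ½-Hölder condition limsup_{h↓0} |U_j(t) − U_j(t−h)|/√h <
4·√(λ_j(t)) at every time t ∈ (t₀,T], then there exists ε > 0, independent of
the initial value, such that every real solution x started off the
singularities exists until T with |x(T) − U₁(T)| > ε and |x(T) − U₂(T)| > ε. -/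
theorem two_slit_uniform_separation (t₀ T : ℝ)
    (ht₀ : 0 ≤ t₀) (htT : t₀ < T)
    (l₁ l₂ U₁ U₂ : ℝ → ℝ)
    (hl₁c : ContinuousOn l₁ (Set.Icc t₀ T)) (hl₂c : ContinuousOn l₂ (Set.Icc t₀ T))
    (hU₁c : ContinuousOn U₁ (Set.Icc t₀ T)) (hU₂c : ContinuousOn U₂ (Set.Icc t₀ T))
    (hl₁ : ∀ t ∈ Set.Icc t₀ T, 0 < l₁ t) (hl₂ : ∀ t ∈ Set.Icc t₀ T, 0 < l₂ t)
    (hsum : ∀ t ∈ Set.Icc t₀ T, l₁ t + l₂ t = 1)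
    (hU : ∀ t ∈ Set.Icc t₀ T, U₁ t < U₂ t)
    (hhold₁ : ∀ t ∈ Set.Ioc t₀ T,
      Filter.limsup
        (fun h : ℝ => ((|U₁ t - U₁ (t - h)| / Real.sqrt h : ℝ) : EReal))
        (nhdsWithin 0 (Set.Ioi 0)) < ((4 * Real.sqrt (l₁ t) : ℝ) : EReal))
    (hhold₂ : ∀ t ∈ Set.Ioc t₀ T,
      Filter.limsup
        (fun h : ℝ => ((|U₂ t - U₂ (t - h)| / Real.sqrt h : ℝ) : EReal))
        (nhdsWithin 0 (Set.Ioi 0)) < ((4 * Real.sqrt (l₂ t) : ℝ) : EReal)) :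
    ∃ ε : ℝ, 0 < ε ∧ ∀ x : ℝ → ℝ,
      ContinuousOn x (Set.Icc t₀ T) →
      (x t₀ ≠ U₁ t₀ ∧ x t₀ ≠ U₂ t₀) →
      (∀ t ∈ Set.Ico t₀ T, x t ≠ U₁ t ∧ x t ≠ U₂ t) →
      (∀ t ∈ Set.Ico t₀ T,
        HasDerivWithinAt x (2 * l₁ t / (x t - U₁ t) + 2 * l₂ t / (x t - U₂ t))
          (Set.Icc t₀ T) t) →
      ε < |x T - U₁ T| ∧ ε < |x T - U₂ T| :=
  two_slit_uniform_separation_general t₀ T htT l₁ l₂ U₁ U₂ hl₁c hl₂c hU₁c hU₂c hl₁ hl₂ hsum hU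
    hhold₁ hhold₂
end
end
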